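/- arXiv:1908.05594 — 3 statements merged into one kernel-verified Lean document; each statement's English description precedes it below -/
import Mathlib

section
/- Let p ≥ 5 be a prime, let a and n be positive integers with gcd(a,p) = 1, and let k be an odd integer with 1 ≤ k ≤ ap^n - 1. Then v_p(s(ap^n, ap^n - k)) ≥ n. -/
/-!
Put `m = a q` with `q = p ^ n` odd. Modulo `q` the numbers `0, …, m - 1` run `a` times through
all residues, so over `ZMod q` the Pochhammer polynomial `x(x+1)⋯(x+m-1)` is the `a`-th power of
`∏_{r ∈ ZMod q} (x + r)`. That product is invariant under `r ↦ -r`, hence is odd or even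
together with `q`, and so `x(x+1)⋯(x+m-1)` is `(-1)^m`-symmetric under `x ↦ -x`. As `2` is a unit
mod `q`, its coefficients `s(m, j)` with `m + j` odd, in particular `s(m, m - k)` for odd `k`,
vanish mod `q`; since `s(m, m - k) > 0` this gives `v_p(s(m, m - k)) ≥ n`.
-/

/-- The (unsigned) Stirling number of the first kind `s(n,k)`, defined by
`x(x+1)(x+2)⋯(x+n-1) = Σ_{k=0}^{n} s(n,k) x^k`. -/
noncomputable def stirlingFirst (n k : ℕ) : ℕ := (ascPochhammer ℕ n).coeff k

open Polynomial Finset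

theorem ascPochhammer_eq_prod_range (R : Type*) [CommSemiring R] (n : ℕ) :
    ascPochhammer R n = ∏ i ∈ range n, (X + (i : R[X])) := by
  induction n with
  | zero => simp
  | succ n ih => rw [ascPochhammer_succ_right, ih, prod_range_succ]

theorem ascPochhammer_zmod_self (q : ℕ) [NeZero q] :
    ascPochhammer (ZMod q) q = ∏ x : ZMod q, (X + C x) := by
  rw [ascPochhammer_eq_prod_range]
  refine prod_nbij' (↑) ZMod.val (fun _ _ ↦ mem_univ _) (fun x _ ↦ mem_range.mpr x.val_lt)
    (fun i hi ↦ ZMod.val_cast_of_lt (mem_range.mp hi)) (fun x _ ↦ ZMod.natCast_zmod_val x)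
    (fun i _ ↦ by simp)

theorem prod_X_add_C_comp_neg_X (R : Type*) [CommRing R] [Fintype R] :
    (∏ x : R, (X + C x)).comp (-X) = (-1) ^ Fintype.card R * ∏ x : R, (X + C x) := by
  have hneg : ∏ x : R, (X - C x) = ∏ x : R, (X + C x) := by
    simpa [sub_eq_add_neg] using Equiv.prod_comp (Equiv.neg R) (fun x ↦ X + C x)
  have hfactor : ∀ x : R, (X + C x).comp (-X) = -1 * (X - C x) := fun x ↦ by
    rw [add_comp, X_comp, C_comp]; ring
  simp_rw [Polynomial.prod_comp, hfactor, prod_mul_distrib, prod_const, card_univ, hneg]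

theorem ascPochhammer_mul_eq_pow {R : Type*} [CommSemiring R] {q : ℕ} (hq : (q : R) = 0)
    (a : ℕ) : ascPochhammer R (a * q) = ascPochhammer R q ^ a := by
  induction a with
  | zero => simp
  | succ a ih =>
    have hcast : ((a * q : ℕ) : R[X]) = 0 := by
      rw [← C_eq_natCast, Nat.cast_mul, hq, mul_zero, C_0]
    rw [add_one_mul, ← ascPochhammer_mul, hcast, add_zero, comp_X, ih, pow_succ]

theorem ascPochhammer_zmod_mul_comp_neg_X (q a : ℕ) [NeZero q] :
    (ascPochhammer (ZMod q) (a * q)).comp (-X) =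
      (-1) ^ (a * q) * ascPochhammer (ZMod q) (a * q) := by
  rw [ascPochhammer_mul_eq_pow (ZMod.natCast_self q), pow_comp, ascPochhammer_zmod_self,
    prod_X_add_C_comp_neg_X, ZMod.card, mul_pow, ← pow_mul, mul_comm q]

theorem coeff_eq_zero_of_comp_neg_X_eq {R : Type*} [CommRing R] (h2 : IsUnit (2 : R))
    {f : R[X]} {m j : ℕ} (hf : f.comp (-X) = (-1) ^ m * f) (hmj : Odd (m + j)) :
    f.coeff j = 0 := by
  have hcoeff := congrArg (coeff · j) hf
  have hX : (-X : R[X]) = C (-1) * X := by simp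
  simp only [hX, comp_C_mul_X_coeff, ← C_1, ← C_neg, ← C_pow, coeff_C_mul] at hcoeff
  have hsq : (-1 : R) ^ j * (-1) ^ j = 1 := by rw [← pow_add, ← two_mul, pow_mul]; simp
  have hodd : (-1 : R) ^ m * (-1) ^ j = -1 := by rw [← pow_add, hmj.neg_one_pow]
  refine h2.mul_right_eq_zero.mp ?_
  linear_combination (-1 : R) ^ j * hcoeff - f.coeff j * hsq + f.coeff j * hodd

theorem natCast_stirlingFirst (R : Type*) [Semiring R] (n k : ℕ) :
    (stirlingFirst n k : R) = (ascPochhammer R n).coeff k := by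
  rw [stirlingFirst, ← ascPochhammer_map (Nat.castRingHom R), coeff_map, eq_natCast]

theorem ascPochhammer_nat_coeff_succ_pos {m j : ℕ} (h : j ≤ m) :
    0 < (ascPochhammer ℕ (m + 1)).coeff (j + 1) := by
  induction m generalizing j with
  | zero => simp [Nat.le_zero.mp h]
  | succ m ih =>
    rw [ascPochhammer_succ_right, mul_add, coeff_add, coeff_mul_X, ← Nat.cast_comm,
      ← C_eq_natCast, coeff_C_mul]
    rcases j with _ | j
    · have := ih (Nat.zero_le m); positivity
    · have := ih (Nat.le_of_succ_le_succ h); positivity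

theorem stirlingFirst_pos {m j : ℕ} (hj : 0 < j) (hjm : j ≤ m) : 0 < stirlingFirst m j := by
  obtain ⟨j, rfl⟩ := Nat.exists_eq_add_of_lt hj
  obtain ⟨m, rfl⟩ := Nat.exists_eq_add_of_lt (hj.trans_le hjm)
  exact ascPochhammer_nat_coeff_succ_pos (by omega)

theorem dvd_stirlingFirst_mul_of_odd {q : ℕ} (hq : Odd q) (a j : ℕ) (h : Odd (a * q + j)) :
    q ∣ stirlingFirst (a * q) j := by
  have : NeZero q := ⟨hq.pos.ne'⟩
  have h2 : IsUnit (2 : ZMod q) := by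
    simpa using (ZMod.isUnit_iff_coprime 2 q).mpr (Nat.coprime_two_left.mpr hq)
  rw [← ZMod.natCast_eq_zero_iff, natCast_stirlingFirst]
  exact coeff_eq_zero_of_comp_neg_X_eq h2 (ascPochhammer_zmod_mul_comp_neg_X q a) h

theorem stmt8_general (p a n k : ℕ) (hp : p.Prime) (hp5 : 5 ≤ p)
    (hkodd : Odd k) (hk2 : k ≤ a * p ^ n - 1) :
    padicValNat p (stirlingFirst (a * p ^ n) (a * p ^ n - k)) ≥ n := by
  have := Fact.mk hp
  obtain ⟨t, rfl⟩ := hkodd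
  have hpow_odd : Odd (p ^ n) := (hp.odd_of_ne_two (by omega)).pow
  have hdvd := dvd_stirlingFirst_mul_of_odd hpow_odd a (a * p ^ n - (2 * t + 1))
    ⟨a * p ^ n - t - 1, by omega⟩
  have hpos : 0 < stirlingFirst (a * p ^ n) (a * p ^ n - (2 * t + 1)) :=
    stirlingFirst_pos (by omega) (by omega)
  exact (padicValNat_dvd_iff_le hpos.ne').mp hdvd

theorem stmt8 (p a n k : ℕ) (hp : p.Prime) (hp5 : 5 ≤ p)
    (ha : 1 ≤ a) (hn : 1 ≤ n) (hgcd : Nat.gcd a p = 1)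
    (hkodd : Odd k) (hk1 : 1 ≤ k) (hk2 : k ≤ a * p ^ n - 1) :
    padicValNat p (stirlingFirst (a * p ^ n) (a * p ^ n - k)) ≥ n :=
  stmt8_general p a n k hp hp5 hkodd hk2
end

section
/- Let p ≥ 5 be a prime and let a and n be positive integers with gcd(a,p) = 1. For any even integer k with 0 ≤ k ≤ ap^n, one has s_{p^n}(ap^n, ap^n - k) ≡ s(ap^n, ap^n - k) (mod p^{2n}), where s_{p^n} denotes the p^n-th Stirling numbers of the first kind and s denotes the Stirling numbers of the first kind. -/
/-- The `m`-th Stirling number of the first kind `s_m(n,k)`, defined by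
`(x+m)(x+m+1)⋯(x+m+n-1) = Σ_{k=0}^{n} s_m(n,k) x^k`. -/
noncomputable def stirlingFirstShift (m n k : ℕ) : ℕ :=
  (∏ i ∈ Finset.range n, (Polynomial.X + Polynomial.C (m + i))).coeff k

/-!
Write `P_N = x(x+1)⋯(x+N-1)`, so that `s_m(N, j)` is the `j`-th coefficient of `P_N(x + m)`.
Modulo `m²` the element `m` squares to zero, hence `P_N(x + m) ≡ P_N + m P_N'` and
`s_m(N, j) ≡ s(N, j) + (j + 1) m s(N, j + 1)`. If `m ∣ N`, then modulo `m` the roots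
`0, -1, …, -(N-1)` of `P_N` are stable under negation, so `P_N(-x) ≡ (-1)^N P_N(x)`; for odd `m`
this kills every coefficient `s(N, i)` with `N + i` odd modulo `m`. With `N + j` even this applies
to `i = j + 1`, and the correction term vanishes modulo `m²`.
-/

open Polynomial Finset

lemma taylor_ascPochhammer {S : Type*} [CommSemiring S] (r : S) (n : ℕ) :
    taylor r (ascPochhammer S n) = ∏ i ∈ range n, (X + C (r + i)) := by
  induction n with
  | zero => simp
  | succ n ih =>
    rw [ascPochhammer_succ_right, taylor_mul, ih, prod_range_succ, taylor_apply, add_comp, X_comp,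
      natCast_comp, C_add, ← C_eq_natCast, add_assoc]

section CommRing

variable {R : Type*} [CommRing R]

lemma ascPochhammer_comp_neg_X (n : ℕ) :
    (ascPochhammer R n).comp (-X) = (-1) ^ n * descPochhammer R n := by
  induction n with
  | zero => simp
  | succ n ih =>
    rw [ascPochhammer_succ_right, descPochhammer_succ_right, mul_comp, ih, add_comp, X_comp,
      natCast_comp]
    ring

lemma ascPochhammer_comp_X_add_one_of_natCast_eq_zero {n : ℕ} (hn : (n : R) = 0) :
    (ascPochhammer R n).comp (X + 1) = ascPochhammer R n := by
  have hX : (n : R[X]) = 0 := by rw [← C_eq_natCast, hn, C_0]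
  apply monic_X.isRegular.left
  dsimp only
  rw [← ascPochhammer_succ_left, ascPochhammer_succ_right, hX, add_zero, mul_comm]

lemma descPochhammer_eq_ascPochhammer_of_natCast_eq_zero {n : ℕ} (hn : (n : R) = 0) :
    descPochhammer R n = ascPochhammer R n := by
  have hX : (n : R[X]) = 0 := by rw [← C_eq_natCast, hn, C_0]
  have := congr_arg (Polynomial.map (Int.castRingHom R)) (descPochhammer_eq_ascPochhammer n)
  rw [descPochhammer_map, map_comp, ascPochhammer_map] at this
  simpa [hX, ascPochhammer_comp_X_add_one_of_natCast_eq_zero hn] using this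

lemma coeff_comp_neg_X (f : R[X]) (j : ℕ) : (f.comp (-X)).coeff j = (-1) ^ j * f.coeff j := by
  induction f using Polynomial.induction_on' with
  | add f g hf hg => simp [add_comp, hf, hg, mul_add]
  | monomial n a =>
    rw [← C_mul_X_pow_eq_monomial, mul_comp, C_comp, X_pow_comp, neg_pow, ← C_1, ← C_neg, ← C_pow,
      mul_left_comm, coeff_C_mul, coeff_C_mul, coeff_X_pow]
    split_ifs with h
    · rw [h]
    · simp

lemma two_mul_coeff_ascPochhammer_eq_zero {n j : ℕ} (hn : (n : R) = 0) (hodd : Odd (n + j)) :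
    2 * (ascPochhammer R n).coeff j = 0 := by
  have h := congr_arg (coeff · j) (ascPochhammer_comp_neg_X (R := R) n)
  simp only [coeff_comp_neg_X, descPochhammer_eq_ascPochhammer_of_natCast_eq_zero hn] at h
  rw [show ((-1 : R[X]) ^ n) = C ((-1) ^ n) by simp, coeff_C_mul] at h
  have hsign : (-1 : R) ^ n * (-1) ^ n = 1 := by rw [← mul_pow, neg_one_mul, neg_neg, one_pow]
  have hodd' : (-1 : R) ^ n * (-1) ^ j = -1 := by rw [← pow_add, hodd.neg_one_pow]
  linear_combination (-(-1) ^ n) * h + (ascPochhammer R n).coeff j * (hodd' - hsign)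

lemma coeff_taylor_of_sq_eq_zero (f : R[X]) {e : R} (he : e ^ 2 = 0) (k : ℕ) :
    (taylor e f).coeff k = f.coeff k + (k + 1) * f.coeff (k + 1) * e := by
  rw [taylor_coeff, ← zero_add e, eval_add_of_sq_eq_zero _ _ _ he, ← coeff_zero_eq_eval_zero,
    ← coeff_zero_eq_eval_zero, coeff_derivative, hasseDeriv_coeff, hasseDeriv_coeff, zero_add,
    Nat.choose_self, add_comm 1 k, Nat.choose_succ_self_right]
  push_cast
  ring

end CommRing

lemma Nat.cast_coeff_ascPochhammer {S : Type*} [Semiring S] (n j : ℕ) :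
    (((ascPochhammer ℕ n).coeff j : ℕ) : S) = (ascPochhammer S n).coeff j := by
  rw [← ascPochhammer_map (Nat.castRingHom S), coeff_map, eq_natCast]

lemma dvd_coeff_ascPochhammer {m n j : ℕ} (hm : Odd m) (hmn : m ∣ n) (hodd : Odd (n + j)) :
    m ∣ (ascPochhammer ℕ n).coeff j := by
  rw [← ZMod.natCast_eq_zero_iff, Nat.cast_coeff_ascPochhammer]
  have h2 : IsUnit (2 : ZMod m) := by
    exact_mod_cast (ZMod.isUnit_iff_coprime 2 m).mpr (Nat.coprime_two_left.mpr hm)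
  exact h2.mul_right_eq_zero.mp
    (two_mul_coeff_ascPochhammer_eq_zero ((ZMod.natCast_eq_zero_iff n m).mpr hmn) hodd)

lemma stirlingFirstShift_eq_coeff_taylor (m n j : ℕ) :
    stirlingFirstShift m n j = (taylor m (ascPochhammer ℕ n)).coeff j := by
  rw [stirlingFirstShift, taylor_ascPochhammer]
  rfl

theorem stirlingFirstShift_modEq_stirlingFirst {m n j : ℕ} (hm : Odd m) (hmn : m ∣ n)
    (hj : Even (n + j)) : stirlingFirstShift m n j ≡ stirlingFirst n j [MOD m ^ 2] := by
  have hsq : (m : ZMod (m ^ 2)) ^ 2 = 0 := by exact_mod_cast ZMod.natCast_self (m ^ 2)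
  obtain ⟨t, ht⟩ : m ∣ (ascPochhammer ℕ n).coeff (j + 1) :=
    dvd_coeff_ascPochhammer hm hmn (by rw [← add_assoc]; exact hj.add_one)
  rw [← ZMod.natCast_eq_natCast_iff, stirlingFirstShift_eq_coeff_taylor, stirlingFirst,
    ← eq_natCast (Nat.castRingHom _), ← coeff_map, map_taylor, eq_natCast, ascPochhammer_map,
    coeff_taylor_of_sq_eq_zero _ hsq, Nat.cast_coeff_ascPochhammer,
    ← Nat.cast_coeff_ascPochhammer n (j + 1), ht]
  push_cast
  linear_combination ((j + 1) * t : ZMod (m ^ 2)) * hsq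

theorem stmt17_general (p a n k : ℕ) (hp : p.Prime) (hp5 : 5 ≤ p)
    (hkeven : Even k) (hk : k ≤ a * p ^ n) :
    stirlingFirstShift (p ^ n) (a * p ^ n) (a * p ^ n - k) ≡
      stirlingFirst (a * p ^ n) (a * p ^ n - k) [MOD p ^ (2 * n)] := by
  have hodd : Odd (p ^ n) := (hp.odd_of_ne_two (by omega)).pow
  obtain ⟨r, rfl⟩ := hkeven
  rw [mul_comm 2 n, pow_mul]
  exact stirlingFirstShift_modEq_stirlingFirst hodd (dvd_mul_left _ _)
    ⟨a * p ^ n - r, by omega⟩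

theorem stmt17 (p a n k : ℕ) (hp : p.Prime) (hp5 : 5 ≤ p)
    (ha : 1 ≤ a) (hn : 1 ≤ n) (hgcd : Nat.gcd a p = 1)
    (hkeven : Even k) (hk : k ≤ a * p ^ n) :
    stirlingFirstShift (p ^ n) (a * p ^ n) (a * p ^ n - k) ≡
      stirlingFirst (a * p ^ n) (a * p ^ n - k) [MOD p ^ (2 * n)] :=
  stmt17_general p a n k hp hp5 hkeven hk
end

section
/- Let p ≥ 5 be a prime and let a, l and k be integers with 2 ≤ a ≤ p-1, 1 ≤ l ≤ a, k even, and (l-1)(p-1)+2 ≤ k ≤ l(p-1)-2. Then s(ap, ap - k) ≡ a·C(a-1, l-1)·s(p,1)^{l-1}·s(p, p - ⟨k⟩) (mod p^2), where ⟨k⟩ = k - (l-1)(p-1) is the unique integer with 0 ≤ ⟨k⟩ ≤ p-2 and k ≡ ⟨k⟩ (mod p-1), and C(a-1, l-1) denotes the binomial coefficient a-1 choose l-1. -/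
/-!
Over `ℤ/p²` write `f = x(x+1)⋯(x+p-1)` and `g = X^p + s(p,1) X`. Since `f ≡ X^p - X (mod p)`,
`f = g + p m` for some polynomial `m`. Because `(jp)² = 0`, Taylor's formula stops at first
order, `f(X + jp) = f + jp f'`, and multiplying out `x(x+1)⋯(x+ap-1) = ∏_{j<a} f(X + jp)`
while discarding everything divisible by `p²` leaves `g^a + a (f - g) g^{a-1} + c g^{a-1}` for
a constant `c`. Every monomial of `g^n = X^n (X^{p-1} + s(p,1))^n` has degree `≡ n (mod p-1)`,
whereas `ap - k ≡ a - 1 + (p - ⟨k⟩) (mod p-1)` with `2 ≤ ⟨k⟩ ≤ p-3`. Hence the coefficient of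
`X^{ap-k}` comes only from `a f g^{a-1}`, namely from `s(p, p-⟨k⟩) X^{p-⟨k⟩}` times the
monomial `C(a-1, l-1) s(p,1)^{l-1} X^{(a-l)p + l-1}` of `g^{a-1}`.
-/

open Polynomial Finset

theorem coeff_ascPochhammer_eq_natCast (R : Type*) [Semiring R] (n i : ℕ) :
    (ascPochhammer R n).coeff i = ((ascPochhammer ℕ n).coeff i : R) := by
  rw [← ascPochhammer_map (Nat.castRingHom R), coeff_map, eq_natCast]

theorem ascPochhammer_zmod_prime (p : ℕ) [Fact p.Prime] :
    ascPochhammer (ZMod p) p = X ^ p - X := by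
  have hp : 1 < p := (Fact.out : p.Prime).one_lt
  have hf := monic_ascPochhammer (ZMod p) p
  have hg : (X ^ p - X : (ZMod p)[X]).Monic := monic_X_pow_sub (by rw [degree_X]; exact_mod_cast hp)
  have hfdeg : (ascPochhammer (ZMod p) p).degree = p := by
    rw [degree_eq_natDegree hf.ne_zero, ascPochhammer_natDegree]
  have hgdeg : (X ^ p - X : (ZMod p)[X]).degree = p := by
    rw [degree_eq_natDegree hg.ne_zero, FiniteField.X_pow_card_sub_X_natDegree_eq _ hp]
  refine eq_of_degree_sub_lt_of_eval_finset_eq univ ?_ fun x _ => ?_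
  · rw [card_univ, ZMod.card, ← hfdeg]
    exact degree_sub_lt_left (hfdeg.trans hgdeg.symm) hf.ne_zero
      (by rw [hf.leadingCoeff, hg.leadingCoeff])
  · rw [eval_sub, eval_pow, eval_X, ZMod.pow_card, sub_self, ← neg_neg x,
      ← ZMod.natCast_zmod_val (-x)]
    exact ascPochhammer_eval_neg_coe_nat_of_lt (ZMod.val_lt _)

theorem prime_dvd_coeff_ascPochhammer {p i : ℕ} (hp : p.Prime) (hi1 : i ≠ 1) (hip : i ≠ p) :
    p ∣ (ascPochhammer ℕ p).coeff i := by
  have := Fact.mk hp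
  rw [← ZMod.natCast_eq_zero_iff, ← coeff_ascPochhammer_eq_natCast, ascPochhammer_zmod_prime,
    coeff_sub, coeff_X_pow, coeff_X, if_neg hip, if_neg (Ne.symm hi1), sub_zero]

theorem exists_ascPochhammer_prime_eq (R : Type*) [CommRing R] {p : ℕ} (hp : p.Prime) :
    ∃ m : R[X],
      ascPochhammer R p = X ^ p + C ((ascPochhammer R p).coeff 1) * X + (p : R[X]) * m := by
  have hspan : Ideal.map C (Ideal.span {(p : R)}) = Ideal.span {(p : R[X])} := by
    rw [Ideal.map_span, Set.image_singleton, map_natCast]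
  suffices h : ascPochhammer R p - X ^ p - C ((ascPochhammer R p).coeff 1) * X ∈
      Ideal.span {(p : R[X])} by
    obtain ⟨m, hm⟩ := Ideal.mem_span_singleton.mp h
    exact ⟨m, by linear_combination hm⟩
  rw [← hspan, Ideal.mem_map_C_iff]
  intro n
  rw [Ideal.mem_span_singleton, coeff_sub, coeff_sub, coeff_C_mul_X, coeff_X_pow,
    coeff_ascPochhammer_eq_natCast R p n, coeff_ascPochhammer_eq_natCast R p 1]
  by_cases hn1 : n = 1
  · simp [hn1, hp.ne_one.symm]
  by_cases hnp : n = p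
  · have hcoeff : (ascPochhammer ℕ p).coeff p = 1 := by
      simpa [ascPochhammer_natDegree] using (monic_ascPochhammer ℕ p).coeff_natDegree
    simp [hnp, hp.ne_one, hcoeff]
  · simpa [hn1, hnp] using Nat.cast_dvd_cast (prime_dvd_coeff_ascPochhammer hp hn1 hnp)

theorem prod_range_add_of_mul_eq_zero {S : Type*} [CommSemiring S] (u : S) (ε : ℕ → S)
    (hε : ∀ i j, ε i * ε j = 0) (n : ℕ) :
    ∏ j ∈ range n, (u + ε j) = u ^ n + (∑ j ∈ range n, ε j) * u ^ (n - 1) := by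
  induction n with
  | zero => simp
  | succ n ih =>
    rcases n with _ | n
    · simp
    · set E := ∑ j ∈ range (n + 1), ε j
      have hcross : E * ε (n + 1) = 0 := by
        rw [sum_mul]; exact sum_eq_zero fun j _ => hε j (n + 1)
      rw [prod_range_succ, ih, sum_range_succ _ (n + 1), Nat.add_sub_cancel, Nat.add_sub_cancel]
      calc (u ^ (n + 1) + E * u ^ n) * (u + ε (n + 1))
          = u ^ (n + 1 + 1) + (E + ε (n + 1)) * u ^ (n + 1) + u ^ n * (E * ε (n + 1)) := by ring
        _ = _ := by rw [hcross, mul_zero, add_zero]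

theorem add_pow_of_mul_self_eq_zero {S : Type*} [CommSemiring S] (x y : S) (hy : y * y = 0)
    (n : ℕ) : (x + y) ^ n = x ^ n + n * y * x ^ (n - 1) := by
  simpa using prod_range_add_of_mul_eq_zero x (fun _ => y) (fun _ _ => hy) n

theorem comp_X_add_of_sq_eq_zero {R : Type*} [CommRing R] (q y : R[X]) (hy : y ^ 2 = 0) :
    q.comp (X + y) = q + derivative q * y := by
  simpa only [comp_eq_aeval, aeval_X_left_apply] using aeval_add_of_sq_eq_zero q X y hy

theorem ascPochhammer_mul_eq_prod_comp (S : Type*) [CommSemiring S] (a p : ℕ) :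
    ascPochhammer S (a * p) =
      ∏ j ∈ range a, (ascPochhammer S p).comp (X + ((j * p : ℕ) : S[X])) := by
  induction a with
  | zero => simp
  | succ a ih => rw [prod_range_succ, ← ih, ascPochhammer_mul, add_one_mul]

theorem prod_range_comp_X_add_natCast_mul_eq {R : Type*} [CommRing R] {p : ℕ}
    (hp : (p : R) ^ 2 = 0) (e : R) (m : R[X]) (a : ℕ) :
    ∏ j ∈ range a, (X ^ p + C e * X + (p : R[X]) * m).comp (X + ((j * p : ℕ) : R[X])) =
      (X ^ p + C e * X) ^ a + (a : R[X]) * ((p : R[X]) * m * (X ^ p + C e * X) ^ (a - 1)) +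
        C ((p * ∑ j ∈ range a, j : ℕ) * e) * (X ^ p + C e * X) ^ (a - 1) := by
  set g : R[X] := X ^ p + C e * X
  set f : R[X] := g + (p : R[X]) * m
  have hπ : (p : R[X]) * p = 0 := by rw [← sq, ← map_natCast C, ← C_pow, hp, C_0]
  have hshift_sq (j : ℕ) : ((j * p : ℕ) : R[X]) ^ 2 = 0 := by
    rw [Nat.cast_mul, mul_pow, sq (p : R[X]), hπ, mul_zero]
  have hderiv : (p : R[X]) * derivative f = p * C e := by
    have : derivative f = (p : R[X]) * X ^ (p - 1) + C e + (p : R[X]) * derivative m := by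
      simp only [f, g, derivative_add, derivative_X_pow, derivative_C_mul_X,
        derivative_natCast_mul, map_natCast]
    linear_combination (X ^ (p - 1) + derivative m) * hπ + p * this
  have hpow : (p : R[X]) * f ^ (a - 1) = p * g ^ (a - 1) := by
    linear_combination (p : R[X]) * add_pow_of_mul_self_eq_zero g ((p : R[X]) * m)
      (by linear_combination m * m * hπ) (a - 1) + ((a - 1 : ℕ) * m * g ^ (a - 1 - 1)) * hπ
  rw [prod_congr rfl fun j _ => comp_X_add_of_sq_eq_zero f _ (hshift_sq j),
    prod_range_add_of_mul_eq_zero f (fun j => derivative f * ((j * p : ℕ) : R[X]))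
      (fun i j => by push_cast; linear_combination (i * j * derivative f * derivative f) * hπ) a,
    add_pow_of_mul_self_eq_zero g ((p : R[X]) * m) (by linear_combination m * m * hπ) a]
  have hsum : ∑ j ∈ range a, derivative f * ((j * p : ℕ) : R[X]) =
      ((∑ j ∈ range a, j : ℕ) : R[X]) * (p * derivative f) := by
    push_cast; rw [sum_mul]; exact sum_congr rfl fun j _ => by ring
  rw [hsum]
  push_cast
  simp only [map_mul, map_sum, map_natCast]
  linear_combination (∑ j ∈ range a, (j : R[X])) * f ^ (a - 1) * hderiv +
    (∑ j ∈ range a, (j : R[X])) * C e * hpow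

section

variable {R : Type*} [CommRing R] (e : R) {d : ℕ}

theorem X_pow_succ_add_C_mul_X_pow_eq (n : ℕ) :
    (X ^ (d + 1) + C e * X) ^ n = X ^ n * expand R d ((X + C e) ^ n) := by
  rw [map_pow, ← mul_pow, map_add, expand_X, expand_C]
  ring

theorem coeff_X_pow_succ_add_C_mul_X_pow (hd : 0 < d) (n N : ℕ) :
    ((X ^ (d + 1) + C e * X) ^ n).coeff N =
      if n ≤ N ∧ d ∣ N - n then e ^ (n - (N - n) / d) * n.choose ((N - n) / d) else 0 := by
  rw [X_pow_succ_add_C_mul_X_pow_eq, coeff_X_pow_mul', coeff_expand hd, coeff_X_add_C_pow]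
  split_ifs <;> tauto

theorem coeff_X_pow_succ_add_C_mul_X_pow_add_mul (hd : 0 < d) (n j : ℕ) :
    ((X ^ (d + 1) + C e * X) ^ n).coeff (n + j * d) = e ^ (n - j) * n.choose j := by
  rw [coeff_X_pow_succ_add_C_mul_X_pow e hd, if_pos ⟨by omega, by simp⟩,
    Nat.add_sub_cancel_left, Nat.mul_div_cancel _ hd]

theorem exists_eq_add_mul_of_coeff_ne_zero (hd : 0 < d) {n N : ℕ}
    (h : ((X ^ (d + 1) + C e * X) ^ n).coeff N ≠ 0) : ∃ j, N = n + j * d := by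
  rw [coeff_X_pow_succ_add_C_mul_X_pow e hd] at h
  split_ifs at h with hN
  · exact ⟨(N - n) / d, by rw [Nat.div_mul_cancel hN.2]; omega⟩
  · exact absurd rfl h

theorem coeff_X_pow_succ_add_C_mul_X_pow_eq_zero (hd : 0 < d) (n q : ℕ) {i : ℕ} (hi : 0 < i)
    (hid : i < d) : ((X ^ (d + 1) + C e * X) ^ n).coeff (n + q * d + i) = 0 := by
  by_contra h
  obtain ⟨j, hj⟩ := exists_eq_add_mul_of_coeff_ne_zero e hd h
  have : d ∣ i := (Nat.dvd_add_right (Dvd.intro_left q rfl)).mp ⟨j, by linarith⟩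
  exact absurd (Nat.le_of_dvd hi this) (by omega)

theorem coeff_mul_X_pow_succ_add_C_mul_X_pow (hd : 0 < d) {f : R[X]} (hf : f.natDegree ≤ d + 1)
    (n q : ℕ) {i : ℕ} (hi : 2 ≤ i) (hid : i < d) :
    (f * (X ^ (d + 1) + C e * X) ^ n).coeff (n + q * d + i) =
      f.coeff i * (e ^ (n - q) * n.choose q) := by
  rw [coeff_mul, sum_eq_single (i, n + q * d), coeff_X_pow_succ_add_C_mul_X_pow_add_mul e hd]
  · rintro ⟨i', N'⟩ hmem hne
    rw [HasAntidiagonal.mem_antidiagonal] at hmem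
    by_cases hi' : d + 1 < i'
    · rw [coeff_eq_zero_of_natDegree_lt (hf.trans_lt hi'), zero_mul]
    by_contra h
    obtain ⟨j, rfl⟩ := exists_eq_add_mul_of_coeff_ne_zero e hd (right_ne_zero_of_mul h)
    have hdvd : (d : ℤ) ∣ i' - i := ⟨q - j, by push_cast at hmem ⊢; linarith⟩
    have hi'i : i' = i := by
      have := Int.eq_zero_of_abs_lt_dvd hdvd (by rw [abs_lt]; constructor <;> omega)
      omega
    subst hi'i
    have hjq : j = q := Nat.eq_of_mul_eq_mul_right hd (by simp only at hmem; omega)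
    exact hne (by rw [hjq])
  · exact fun h => absurd (HasAntidiagonal.mem_antidiagonal.mpr (by omega)) h

end

theorem natDegree_ascPochhammer_le (R : Type*) [Semiring R] (n : ℕ) :
    (ascPochhammer R n).natDegree ≤ n := by
  rw [← ascPochhammer_map (Nat.castRingHom R)]
  exact natDegree_map_le.trans (ascPochhammer_natDegree ℕ n).le

theorem ascPochhammer_mul_prime_eq {R : Type*} [CommRing R] {p : ℕ} (hp : p.Prime)
    (hpR : (p : R) ^ 2 = 0) (a : ℕ) :
    ascPochhammer R (a * p) =
      (X ^ p + C ((ascPochhammer R p).coeff 1) * X) ^ a +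
      (a : R[X]) * ((ascPochhammer R p - (X ^ p + C ((ascPochhammer R p).coeff 1) * X)) *
        (X ^ p + C ((ascPochhammer R p).coeff 1) * X) ^ (a - 1)) +
      C (((p * ∑ j ∈ range a, j : ℕ) : R) * (ascPochhammer R p).coeff 1) *
        (X ^ p + C ((ascPochhammer R p).coeff 1) * X) ^ (a - 1) := by
  obtain ⟨m, hm⟩ := exists_ascPochhammer_prime_eq R hp
  set e := (ascPochhammer R p).coeff 1
  rw [ascPochhammer_mul_eq_prod_comp, hm, add_sub_cancel_left,
    prod_range_comp_X_add_natCast_mul_eq hpR]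

theorem coeff_ascPochhammer_mul_prime {R : Type*} [CommRing R] {p : ℕ} (hp : p.Prime)
    (hpR : (p : R) ^ 2 = 0) (a q : ℕ) {c : ℕ} (hc : 2 ≤ c) (hcp : c + 2 < p) :
    (ascPochhammer R (a * p)).coeff (a + q * (p - 1) + c) =
      a * ((ascPochhammer R p).coeff 1 ^ (a - 1 - q) * (a - 1).choose q) *
        (ascPochhammer R p).coeff (c + 1) := by
  obtain ⟨d, rfl⟩ : ∃ d, p = d + 1 := ⟨p - 1, (Nat.sub_add_cancel hp.one_le).symm⟩
  rw [Nat.add_sub_cancel]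
  have hd : 0 < d := by omega
  rcases a with _ | a
  · simp [coeff_one]
    omega
  rw [ascPochhammer_mul_prime_eq hp hpR, Nat.add_sub_cancel]
  set e := (ascPochhammer R (d + 1)).coeff 1
  have hN : a + 1 + q * d + c = a + q * d + (c + 1) := by ring
  have hg_succ : ((X ^ (d + 1) + C e * X) ^ (a + 1)).coeff (a + 1 + q * d + c) = 0 :=
    coeff_X_pow_succ_add_C_mul_X_pow_eq_zero e hd _ _ (by omega) (by omega)
  have hg : ((X ^ (d + 1) + C e * X) ^ a).coeff (a + 1 + q * d + c) = 0 := by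
    rw [hN]; exact coeff_X_pow_succ_add_C_mul_X_pow_eq_zero e hd _ _ (by omega) (by omega)
  have hfg : (ascPochhammer R (d + 1) * (X ^ (d + 1) + C e * X) ^ a).coeff (a + 1 + q * d + c) =
      (ascPochhammer R (d + 1)).coeff (c + 1) * (e ^ (a - q) * a.choose q) := by
    rw [hN]
    exact coeff_mul_X_pow_succ_add_C_mul_X_pow e hd (natDegree_ascPochhammer_le R _) _ _
      (by omega) (by omega)
  rw [coeff_add, coeff_add, coeff_natCast_mul, coeff_C_mul, sub_mul, ← pow_succ', coeff_sub,
    hg_succ, hg, hfg]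
  ring

theorem stmt19_general (p a l k : ℕ) (hp : p.Prime)
    (hl1 : 1 ≤ l) (hl2 : l ≤ a)
    (hk1 : (l - 1) * (p - 1) + 2 ≤ k) (hk2 : k ≤ l * (p - 1) - 2) :
    stirlingFirst (a * p) (a * p - k) ≡
      a * Nat.choose (a - 1) (l - 1) * (stirlingFirst p 1) ^ (l - 1) *
        stirlingFirst p (p - (k - (l - 1) * (p - 1))) [MOD p ^ 2] := by
  set r := k - (l - 1) * (p - 1)
  have hlp : l * (p - 1) = (l - 1) * (p - 1) + (p - 1) := by
    rw [← add_one_mul, Nat.sub_add_cancel hl1]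
  have hap : a * p = a + (a - l) * (p - 1) + l * (p - 1) := by
    rw [add_assoc, ← add_mul, Nat.sub_add_cancel hl2, Nat.mul_sub_one]
    have := Nat.le_mul_of_pos_right a hp.pos
    omega
  have hN : a * p - k = a + (a - l) * (p - 1) + (p - 1 - r) := by omega
  have hpr : p - 1 - r + 1 = p - r := by omega
  have hexp : a - 1 - (a - l) = l - 1 := by omega
  have hchoose : (a - 1).choose (a - l) = (a - 1).choose (l - 1) :=
    Nat.choose_symm_of_eq_add (by omega)
  have hpR : (p : ZMod (p ^ 2)) ^ 2 = 0 := by exact_mod_cast ZMod.natCast_self (p ^ 2)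
  rw [← ZMod.natCast_eq_natCast_iff]
  simp only [stirlingFirst, Nat.cast_mul, Nat.cast_pow, ← coeff_ascPochhammer_eq_natCast]
  rw [hN, coeff_ascPochhammer_mul_prime hp hpR a (a - l) (by omega) (by omega), hpr, hexp,
    hchoose]
  ring

theorem stmt19 (p a l k : ℕ) (hp : p.Prime) (hp5 : 5 ≤ p)
    (ha2 : 2 ≤ a) (ha : a ≤ p - 1) (hl1 : 1 ≤ l) (hl2 : l ≤ a)
    (hkeven : Even k) (hk1 : (l - 1) * (p - 1) + 2 ≤ k) (hk2 : k ≤ l * (p - 1) - 2) :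
    stirlingFirst (a * p) (a * p - k) ≡
      a * Nat.choose (a - 1) (l - 1) * (stirlingFirst p 1) ^ (l - 1) *
        stirlingFirst p (p - (k - (l - 1) * (p - 1))) [MOD p ^ 2] :=
  stmt19_general p a l k hp hl1 hl2 hk1 hk2
end
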